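/- arXiv:2301.01573 — 6 statements merged into one kernel-verified Lean document; each statement's English description precedes it below -/
import Mathlib

section
/- Let G be a group acting faithfully and almost doubly transitively on a finite set T with n ≥ 3 elements. If the order of the image of G in the permutation group of T is even, then the action of G on T is doubly transitive. -/
/-- A faithful, almost doubly transitive action on a finite set with at least 3
elements whose image in the permutation group has even order is doubly transitive. -/
theorem stmt_1 (G T : Type*) [Group G] [Fintype T] [DecidableEq T] [MulAction G T]
    [FaithfulSMul G T]
    (h3 : 3 ≤ Fintype.card T)
    (htrans : MulAction.IsPretransitive G T)
    (h2 : ∀ A B : Finset T, A.card = 2 → B.card = 2 →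
      ∃ g : G, A.image (fun t => g • t) = B)
    (heven : Even (Nat.card (MulAction.toPermHom G T).range)) :
    ∀ a b c d : T, a ≠ b → c ≠ d → ∃ g : G, g • a = c ∧ g • b = d := by
  classical
  -- get an element of order 2 in the image
  have hdvd : (2:ℕ) ∣ Fintype.card (MulAction.toPermHom G T).range := by
    rw [← Nat.card_eq_fintype_card]
    exact heven.two_dvd
  obtain ⟨σ, hσ⟩ := exists_prime_orderOf_dvd_card 2 hdvd
  obtain ⟨g₀, hg₀⟩ := σ.2
  have hσ2 : (σ : Equiv.Perm T) ^ 2 = 1 := by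
    have h := pow_orderOf_eq_one σ
    rw [hσ] at h
    exact congrArg Subtype.val h
  have hσne : (σ : Equiv.Perm T) ≠ 1 := by
    intro h
    have : σ = 1 := Subtype.ext h
    rw [this, orderOf_one] at hσ; omega
  obtain ⟨x, hx⟩ : ∃ x, (σ : Equiv.Perm T) x ≠ x := by
    by_contra hc
    push_neg at hc
    exact hσne (Equiv.ext hc)
  set y := (σ : Equiv.Perm T) x with hy
  have hxy : x ≠ y := fun h => hx h.symm
  have key : ∀ t, g₀ • t = (σ : Equiv.Perm T) t := fun t => by rw [← hg₀]; rfl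
  have hgx : g₀ • x = y := by rw [key, hy]
  have hgy : g₀ • y = x := by
    have h' : ((σ : Equiv.Perm T) ^ 2) x = x := by rw [hσ2]; rfl
    rw [sq, Equiv.Perm.mul_apply] at h'
    rw [key, hy]; exact h'
  -- for any pair, some element swaps it
  have swap : ∀ a b : T, a ≠ b → ∃ s : G, s • a = b ∧ s • b = a := by
    intro a b hab
    obtain ⟨h, hh⟩ := h2 {x, y} {a, b} (Finset.card_pair hxy) (Finset.card_pair hab)
    have hmx : h • x ∈ ({a, b} : Finset T) := by
      rw [← hh]; exact Finset.mem_image_of_mem _ (by simp)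
    have hmy : h • y ∈ ({a, b} : Finset T) := by
      rw [← hh]; exact Finset.mem_image_of_mem _ (by simp)
    simp only [Finset.mem_insert, Finset.mem_singleton] at hmx hmy
    have hne : h • x ≠ h • y := fun e => hxy (smul_left_cancel h e)
    rcases hmx with h1 | h1 <;> rcases hmy with h2' | h2'
    · exact absurd (h1.trans h2'.symm) hne
    · refine ⟨h * g₀ * h⁻¹, ?_, ?_⟩
      · rw [mul_smul, mul_smul, ← h1, inv_smul_smul, hgx, h2']
      · rw [mul_smul, mul_smul, ← h2', inv_smul_smul, hgy, h1]
    · refine ⟨h * g₀ * h⁻¹, ?_, ?_⟩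
      · rw [mul_smul, mul_smul, ← h2', inv_smul_smul, hgy, h1]
      · rw [mul_smul, mul_smul, ← h1, inv_smul_smul, hgx, h2']
    · exact absurd (h1.trans h2'.symm) hne
  intro a b c d hab hcd
  obtain ⟨g, hg⟩ := h2 {a, b} {c, d} (Finset.card_pair hab) (Finset.card_pair hcd)
  have hma : g • a ∈ ({c, d} : Finset T) := by
    rw [← hg]; exact Finset.mem_image_of_mem _ (by simp)
  have hmb : g • b ∈ ({c, d} : Finset T) := by
    rw [← hg]; exact Finset.mem_image_of_mem _ (by simp)
  simp only [Finset.mem_insert, Finset.mem_singleton] at hma hmb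
  have hne : g • a ≠ g • b := fun e => hab (smul_left_cancel g e)
  rcases hma with h1 | h1 <;> rcases hmb with h2' | h2'
  · exact absurd (h1.trans h2'.symm) hne
  · exact ⟨g, h1, h2'⟩
  · obtain ⟨s, hs1, hs2⟩ := swap c d hcd
    exact ⟨s * g, by rw [mul_smul, h1, hs2], by rw [mul_smul, h2', hs1]⟩
  · exact absurd (h1.trans h2'.symm) hne
end

section
/- Let G be a group acting faithfully and almost doubly transitively on a finite set T with n ≥ 3 elements. Then the order of the image of G in Perm(T) is divisible by n(n-1)/2. In particular, if 4 divides n or n ≡ 1 (mod 4), then the action is doubly transitive. -/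
open Pointwise

section aux

variable {G T : Type*} [Group G] [DecidableEq T] [MulAction G T]

/-- From almost double transitivity, any unordered pair maps to any unordered pair,
in the pointwise form. -/
lemma aux_pair (h2 : ∀ A B : Finset T, A.card = 2 → B.card = 2 →
      ∃ g : G, A.image (fun t => g • t) = B)
    {a b c d : T} (hab : a ≠ b) (hcd : c ≠ d) :
    ∃ g : G, (g • a = c ∧ g • b = d) ∨ (g • a = d ∧ g • b = c) := by
  obtain ⟨g, hg⟩ := h2 {a, b} {c, d} (Finset.card_pair hab) (Finset.card_pair hcd)
  refine ⟨g, ?_⟩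
  rw [Finset.image_insert, Finset.image_singleton] at hg
  have h1 : g • a ∈ ({c, d} : Finset T) := by rw [← hg]; simp
  have h2' : g • b ∈ ({c, d} : Finset T) := by rw [← hg]; simp
  simp only [Finset.mem_insert, Finset.mem_singleton] at h1 h2'
  have hne : g • a ≠ g • b := fun h => hab (smul_left_cancel g h)
  have hdmem : d ∈ ({g • a, g • b} : Finset T) := by rw [hg]; simp
  have hcmem : c ∈ ({g • a, g • b} : Finset T) := by rw [hg]; simp
  simp only [Finset.mem_insert, Finset.mem_singleton] at hdmem hcmem
  rcases h1 with h1 | h1 <;> rcases h2' with h2'' | h2'' <;> tauto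

end aux

/-- For a faithful almost doubly transitive action on a finite set of n ≥ 3 elements,
n(n-1)/2 divides the order of the image of G in Perm(T); in particular, if 4 ∣ n or
n ≡ 1 mod 4 then the action is doubly transitive. -/
theorem stmt_2 (G T : Type*) [Group G] [Fintype T] [DecidableEq T] [MulAction G T]
    [FaithfulSMul G T]
    (h3 : 3 ≤ Fintype.card T)
    (htrans : MulAction.IsPretransitive G T)
    (h2 : ∀ A B : Finset T, A.card = 2 → B.card = 2 →
      ∃ g : G, A.image (fun t => g • t) = B) :
    ((Fintype.card T * (Fintype.card T - 1)) / 2 ∣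
        Nat.card (MulAction.toPermHom G T).range) ∧
      ((4 ∣ Fintype.card T ∨ Fintype.card T % 4 = 1) →
        ∀ a b c d : T, a ≠ b → c ≠ d → ∃ g : G, g • a = c ∧ g • b = d) := by
  classical
  set n := Fintype.card T with hn
  obtain ⟨a₀, b₀, hab₀⟩ := Fintype.exists_pair_of_one_lt_card (by omega : 1 < Fintype.card T)
  set A₀ : Finset T := {a₀, b₀} with hA₀
  have hA₀card : A₀.card = 2 := Finset.card_pair hab₀
  -- orbit of A₀ is the set of all 2-element subsets
  have horbit : MulAction.orbit G A₀ = {B : Finset T | B.card = 2} := by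
    ext B
    constructor
    · rintro ⟨g, rfl⟩
      simpa [Finset.card_smul_finset] using hA₀card
    · intro hB
      obtain ⟨g, hg⟩ := h2 A₀ B hA₀card hB
      exact ⟨g, show g • A₀ = B by rw [Finset.smul_finset_def]; exact hg⟩
  have hcardorbit : (MulAction.orbit G A₀).ncard = n.choose 2 := by
    rw [horbit]
    have : {B : Finset T | B.card = 2}.ncard = Nat.card {B : Finset T // B.card = 2} :=
      (Nat.card_coe_set_eq _).symm
    rw [this, Nat.card_eq_fintype_card, Fintype.card_finset_len]
  -- kernel is contained in the stabilizer
  have hker : (MulAction.toPermHom G T).ker ≤ MulAction.stabilizer G A₀ := by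
    intro g hg
    have hfix : ∀ t : T, g • t = t := by
      intro t
      have : (MulAction.toPermHom G T) g = 1 := hg
      have := Equiv.Perm.ext_iff.mp this t
      simpa using this
    show g • A₀ = A₀
    rw [Finset.smul_finset_def]
    ext t; simp [hfix]
  have hdvd : n.choose 2 ∣ Nat.card (MulAction.toPermHom G T).range := by
    rw [← Subgroup.index_ker]
    have := Subgroup.index_dvd_of_le hker
    rwa [MulAction.index_stabilizer, hcardorbit] at this
  have hchoose : n.choose 2 = n * (n - 1) / 2 := Nat.choose_two_right n
  constructor
  · rw [← hchoose]; exact hdvd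
  · -- double transitivity part
    intro hcond a b c d hab hcd
    -- step 1: |range| is even
    have heven : 2 ∣ Nat.card (MulAction.toPermHom G T).range := by
      refine dvd_trans ?_ hdvd
      rcases hcond with h4 | h4
      · obtain ⟨m, hm⟩ := h4
        have : n * (n - 1) = 2 * (2 * m * (n - 1)) := by rw [hm]; ring
        rw [hchoose, this, Nat.mul_div_cancel_left _ (by norm_num)]
        exact Dvd.dvd.mul_right (dvd_mul_right 2 m) _
      · have : ∃ m, n - 1 = 4 * m := ⟨n / 4, by omega⟩
        obtain ⟨m, hm⟩ := this
        have : n * (n - 1) = 2 * (2 * (n * m)) := by rw [hm]; ring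
        rw [hchoose, this, Nat.mul_div_cancel_left _ (by norm_num)]
        exact dvd_mul_right 2 _
    -- step 2: there is an element of order 2 in the range
    haveI : Fact (Nat.Prime 2) := ⟨Nat.prime_two⟩
    obtain ⟨σ, hσ⟩ := exists_prime_orderOf_dvd_card' (G := (MulAction.toPermHom G T).range)
      2 heven
    obtain ⟨g₀, hg₀⟩ := σ.2
    -- the permutation π := σ.val has order 2, so it has a 2-cycle
    have hσ1 : (σ : Equiv.Perm T) ≠ 1 := by
      intro h
      have : (σ : (MulAction.toPermHom G T).range) = 1 := Subtype.ext h
      rw [this] at hσ; simp at hσ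
    have hσ2 : ∀ t : T, (σ : Equiv.Perm T) ((σ : Equiv.Perm T) t) = t := by
      intro t
      have : σ ^ 2 = 1 := by rw [← hσ]; exact pow_orderOf_eq_one σ
      have h' : ((σ : Equiv.Perm T)) ^ 2 = 1 := by
        have := congrArg (Subtype.val) this
        push_cast at this
        exact_mod_cast this
      calc (σ : Equiv.Perm T) ((σ : Equiv.Perm T) t) = ((σ : Equiv.Perm T) ^ 2) t := rfl
        _ = t := by rw [h']; rfl
    obtain ⟨x₀, hx₀⟩ : ∃ t : T, (σ : Equiv.Perm T) t ≠ t := by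
      by_contra h
      push_neg at h
      exact hσ1 (Equiv.ext h)
    set y₀ := (σ : Equiv.Perm T) x₀ with hy₀
    have hxy : x₀ ≠ y₀ := fun h => hx₀ h.symm
    -- g₀ swaps x₀ and y₀
    have hg₀x : g₀ • x₀ = y₀ := by
      rw [hy₀, ← hg₀]; rfl
    have hg₀y : g₀ • y₀ = x₀ := by
      have := hσ2 x₀
      rw [← hy₀] at this
      rw [← this, ← hg₀]; rfl
    -- there exists an element swapping c and d
    have hswap : ∃ s : G, s • c = d ∧ s • d = c := by
      obtain ⟨k, hk⟩ := aux_pair h2 hxy hcd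
      rcases hk with ⟨hk1, hk2⟩ | ⟨hk1, hk2⟩
      · refine ⟨k * g₀ * k⁻¹, ?_, ?_⟩
        · rw [mul_smul, mul_smul, ← hk1, inv_smul_smul, hg₀x, hk2]
        · rw [mul_smul, mul_smul, ← hk2, inv_smul_smul, hg₀y, hk1]
      · refine ⟨k * g₀ * k⁻¹, ?_, ?_⟩
        · rw [mul_smul, mul_smul, ← hk2, inv_smul_smul, hg₀y, hk1]
        · rw [mul_smul, mul_smul, ← hk1, inv_smul_smul, hg₀x, hk2]
    obtain ⟨s, hs1, hs2⟩ := hswap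
    obtain ⟨h, hh⟩ := aux_pair h2 hab hcd
    rcases hh with ⟨hh1, hh2⟩ | ⟨hh1, hh2⟩
    · exact ⟨h, hh1, hh2⟩
    · refine ⟨s * h, ?_, ?_⟩
      · rw [mul_smul, hh1, hs2]
      · rw [mul_smul, hh2, hs1]
end

section
/- Let q be a prime power with q ≡ 3 (mod 4), and let H be the unique subgroup of index 2 in the multiplicative group F_q^*. Let G be the group of affine transformations x ↦ ax + b of F_q with a ∈ H and b ∈ F_q. Then the action of G on F_q is almost doubly transitive but not doubly transitive. -/
/-- Let F be a finite field with q ≡ 3 (mod 4) elements and H the subgroup of index 2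
in Fˣ. The group of affine maps x ↦ ax + b with a ∈ H, b ∈ F acts almost doubly
transitively, but not doubly transitively, on F. -/
theorem stmt_4 (F : Type*) [Field F] [Fintype F] [DecidableEq F]
    (hq : Fintype.card F % 4 = 3)
    (H : Subgroup Fˣ) (hH : H.index = 2) :
    (∀ A B : Finset F, A.card = 2 → B.card = 2 →
      ∃ a ∈ H, ∃ b : F, A.image (fun x => (a : F) * x + b) = B) ∧
    ¬ (∀ x₁ x₂ y₁ y₂ : F, x₁ ≠ x₂ → y₁ ≠ y₂ →
      ∃ a ∈ H, ∃ b : F, (a : F) * x₁ + b = y₁ ∧ (a : F) * x₂ + b = y₂) := by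
  -- basic char facts
  have hchar : ringChar F ≠ 2 := by
    intro h
    have := FiniteField.even_card_iff_char_two.mp h
    omega
  have hp : (ringChar F).Prime := CharP.char_is_prime F _
  have hneone : (-1 : F) ≠ 1 := by
    have h2 : 2 < ringChar F := by
      rcases hp.two_le.lt_or_eq with h | h
      · exact h
      · exact absurd h.symm hchar
    have : Fact (2 < ringChar F) := ⟨h2⟩
    exact CharP.neg_one_ne_one F (ringChar F)
  -- -1 as a unit is not in H
  have hnegH : (-1 : Fˣ) ∉ H := by
    intro hmem
    have hord : orderOf (-1 : Fˣ) = 2 := by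
      apply orderOf_eq_prime
      · simp
      · intro h
        apply hneone
        simpa using congrArg (Units.val) h
    have hcardH : 2 * Nat.card H = Fintype.card F - 1 := by
      have := Subgroup.index_mul_card H
      rw [hH] at this
      rw [this, Nat.card_eq_fintype_card, Fintype.card_units]
    have hdvd : orderOf (⟨-1, hmem⟩ : H) ∣ Nat.card H := orderOf_dvd_natCard _
    have : orderOf (⟨-1, hmem⟩ : H) = 2 := by
      rw [← hord]
      exact (orderOf_injective H.subtype Subtype.coe_injective ⟨-1, hmem⟩).symm
    rw [this] at hdvd
    obtain ⟨k, hk⟩ := hdvd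
    omega
  constructor
  · intro A B hA hB
    obtain ⟨x₁, x₂, hx, rfl⟩ := Finset.card_eq_two.mp hA
    obtain ⟨y₁, y₂, hy, rfl⟩ := Finset.card_eq_two.mp hB
    have hu : x₂ - x₁ ≠ 0 := sub_ne_zero.mpr (Ne.symm hx)
    have hv : y₂ - y₁ ≠ 0 := sub_ne_zero.mpr (Ne.symm hy)
    set c0 : F := (y₂ - y₁) * (x₂ - x₁)⁻¹ with hc0
    have hc0ne : c0 ≠ 0 := mul_ne_zero hv (inv_ne_zero hu)
    set c : Fˣ := Units.mk0 c0 hc0ne with hc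
    have key : c0 * (x₂ - x₁) = y₂ - y₁ := by
      rw [hc0, mul_assoc, inv_mul_cancel₀ hu, mul_one]
    by_cases hcH : c ∈ H
    · refine ⟨c, hcH, y₁ - c0 * x₁, ?_⟩
      have h1 : (c : F) * x₁ + (y₁ - c0 * x₁) = y₁ := by
        simp only [hc, Units.val_mk0]; ring
      have h2 : (c : F) * x₂ + (y₁ - c0 * x₁) = y₂ := by
        simp only [hc, Units.val_mk0]
        linear_combination key
      rw [Finset.image_insert, Finset.image_singleton, h1, h2]
    · have hncH : -c ∈ H := by
        have : (-1 : Fˣ) * c ∈ H := by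
          rw [Subgroup.mul_mem_iff_of_index_two hH]
          simp [hnegH, hcH]
        simpa using this
      refine ⟨-c, hncH, y₂ + c0 * x₁, ?_⟩
      have h1 : ((-c : Fˣ) : F) * x₁ + (y₂ + c0 * x₁) = y₂ := by
        simp only [hc, Units.val_neg, Units.val_mk0]; ring
      have h2 : ((-c : Fˣ) : F) * x₂ + (y₂ + c0 * x₁) = y₁ := by
        simp only [hc, Units.val_neg, Units.val_mk0]
        linear_combination -key
      rw [Finset.image_insert, Finset.image_singleton, h1, h2, Finset.pair_comm]
  · intro hdt
    obtain ⟨a, haH, b, h1, h2⟩ := hdt 0 1 1 0 zero_ne_one one_ne_zero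
    have hb : b = 1 := by simpa using h1
    have ha : (a : F) = -1 := by
      rw [hb] at h2; linear_combination h2
    have : a = -1 := Units.ext (by simp [ha])
    rw [this] at haH
    exact hnegH haH
end

section
/- Let E be a number field with [E:ℚ] = 2g where g ≥ 3, such that every subfield F of E satisfies [F:ℚ] ∈ {1, g, 2g}. If E is not primitive (i.e., E has a proper subfield other than ℚ), then E contains exactly one proper subfield other than ℚ, and this subfield has degree g over ℚ. -/
/-!
Two distinct subfields `F₁, F₂` of degree `g` have codimension 2, so they are the fixed fields of
involutions `s`, `t` of `E`. Their intersection is `ℚ` by the degree hypothesis, hence `⟨s, t⟩` has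
fixed field `ℚ`: the extension `E/ℚ` is Galois with a group of order `2g` generated by two
involutions. Such a group is dihedral, and the rotation subgroup `⟨st⟩` has index 2; its fixed
field is a quadratic subfield, which is impossible for `g ≥ 3`.
-/

open IntermediateField Module

namespace Subgroup

variable {G : Type*} [Group G]

theorem exists_mul_self_eq_one_zpowers_eq_of_card_eq_two {H : Subgroup G}
    (hH : Nat.card H = 2) : ∃ s : G, s * s = 1 ∧ zpowers s = H := by
  have : Finite H := Nat.finite_of_card_ne_zero (by omega)
  have : Nontrivial H := Finite.one_lt_card_iff_nontrivial.mp (by omega)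
  obtain ⟨s, hs1⟩ := exists_ne (1 : H)
  have hord : orderOf s = 2 :=
    (Nat.dvd_prime Nat.prime_two).mp (hH ▸ _root_.orderOf_dvd_natCard s) |>.resolve_left
      (by rwa [orderOf_eq_one_iff])
  refine ⟨s, ?_, ?_⟩
  · rw [← pow_two, ← hord]
    exact_mod_cast pow_orderOf_eq_one s
  · refine eq_of_le_of_card_ge (zpowers_le.mpr s.2) ?_
    rw [hH, Nat.card_zpowers, orderOf_coe, hord]

variable {s t : G}

theorem mem_or_mul_mem_zpowers_mul (hs : s * s = 1) (ht : t * t = 1)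
    (h : closure {s, t} = ⊤) (g : G) :
    g ∈ zpowers (s * t) ∨ s * g ∈ zpowers (s * t) := by
  have hinv : ∀ x ∈ ({s, t} : Set G), x⁻¹ = x := by
    rintro x (rfl | rfl)
    exacts [inv_eq_of_mul_eq_one_right hs, inv_eq_of_mul_eq_one_right ht]
  have step : ∀ x ∈ ({s, t} : Set G), ∀ y,
      y ∈ zpowers (s * t) ∨ s * y ∈ zpowers (s * t) →
      x * y ∈ zpowers (s * t) ∨ s * (x * y) ∈ zpowers (s * t) := by
    rintro x (hx | hx) y (hy | hy) <;> rw [hx]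
    · exact Or.inr (by rwa [← mul_assoc, hs, one_mul])
    · exact Or.inl hy
    · exact Or.inr (by rw [← mul_assoc]; exact mul_mem (mem_zpowers _) hy)
    · have : t * y = (s * t)⁻¹ * (s * y) := by
        rw [mul_inv_rev, mul_assoc, inv_mul_cancel_left, hinv t (by simp)]
      exact Or.inl (this ▸ mul_mem (inv_mem (mem_zpowers _)) hy)
  have hg : g ∈ closure {s, t} := h ▸ mem_top g
  induction hg using closure_induction_left with
  | one => exact Or.inl (one_mem _)
  | mul_left x hx y _ ih => exact step x hx y ih
  | inv_mul_cancel x hx y _ ih => rw [hinv x hx]; exact step x hx y ih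

theorem index_zpowers_mul_le_two (hs : s * s = 1) (ht : t * t = 1)
    (h : closure {s, t} = ⊤) : (zpowers (s * t)).index ≤ 2 := by
  have hsurj : Function.Surjective
      (fun b : Bool => ((if b then s else 1 : G) : G ⧸ zpowers (s * t))) := by
    refine QuotientGroup.mk_surjective.forall.mpr fun g => ?_
    rcases mem_or_mul_mem_zpowers_mul hs ht h g with hg | hg
    · exact ⟨false, QuotientGroup.eq.mpr (by simpa using hg)⟩
    · exact ⟨true, QuotientGroup.eq.mpr (by simpa [inv_eq_of_mul_eq_one_right hs] using hg)⟩
  rw [index_eq_card]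
  simpa using Nat.card_le_card_of_surjective _ hsurj

theorem index_zpowers_mul_eq_two [Finite G] (hs : s * s = 1) (ht : t * t = 1)
    (h : closure {s, t} = ⊤) (hG : 2 < Nat.card G) : (zpowers (s * t)).index = 2 := by
  have hle := index_zpowers_mul_le_two hs ht h
  have hne : (zpowers (s * t)).index ≠ 1 := by
    intro h1
    have htop : zpowers (s * t) = ⊤ := index_eq_one.mp h1
    have hcomm : s * t = t * s := by
      obtain ⟨a, ha⟩ := mem_zpowers_iff.mp (htop ▸ mem_top s)
      obtain ⟨b, hb⟩ := mem_zpowers_iff.mp (htop ▸ mem_top t)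
      have hc := Commute.zpow_zpow_self (s * t) a b
      rw [ha, hb] at hc
      exact hc.eq
    have hsq : (s * t) ^ 2 = 1 := by
      rw [pow_two]
      nth_rw 2 [hcomm]
      rw [mul_assoc, ← mul_assoc t, ht, one_mul, hs]
    have := orderOf_le_of_pow_eq_one two_pos hsq
    rw [← Nat.card_zpowers, htop, card_top] at this
    omega
  have := index_ne_zero_of_finite (H := zpowers (s * t))
  omega

end Subgroup

namespace IntermediateField

variable {K E : Type*} [Field K] [Field E] [Algebra K E] [FiniteDimensional K E]

theorem fixedField_fixingSubgroup_of_isGalois (F : IntermediateField K E)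
    [IsGalois F E] : fixedField F.fixingSubgroup = F := by
  refine (eq_of_le_of_finrank_eq' ((le_iff_le _ _).mpr le_rfl) ?_).symm
  rw [finrank_fixedField_eq_card, Nat.card_congr (fixingSubgroupEquiv F).toEquiv,
    IsGalois.card_aut_eq_finrank]

theorem exists_fixedField_zpowers_eq_of_finrank_eq_two
    [Algebra.IsSeparable K E] (F : IntermediateField K E) (hF : finrank F E = 2) :
    ∃ s : Gal(E/K), s * s = 1 ∧ fixedField (Subgroup.zpowers s) = F := by
  have : Algebra.IsQuadraticExtension F E := ⟨hF⟩
  have hcard : Nat.card F.fixingSubgroup = 2 := by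
    rw [Nat.card_congr (fixingSubgroupEquiv F).toEquiv, IsGalois.card_aut_eq_finrank, hF]
  obtain ⟨s, hs, hsF⟩ := Subgroup.exists_mul_self_eq_one_zpowers_eq_of_card_eq_two hcard
  exact ⟨s, hs, hsF ▸ fixedField_fixingSubgroup_of_isGalois F⟩

theorem exists_finrank_eq_two_of_inf_eq_bot [Algebra.IsSeparable K E]
    {F₁ F₂ : IntermediateField K E} (h₁ : finrank F₁ E = 2) (h₂ : finrank F₂ E = 2)
    (hinf : F₁ ⊓ F₂ = ⊥) (hE : 2 < finrank K E) :
    ∃ L : IntermediateField K E, finrank K L = 2 := by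
  obtain ⟨s, hs, hsF⟩ := exists_fixedField_zpowers_eq_of_finrank_eq_two F₁ h₁
  obtain ⟨t, ht, htF⟩ := exists_fixedField_zpowers_eq_of_finrank_eq_two F₂ h₂
  have hfix : fixedField (Subgroup.closure {s, t}) = ⊥ := by
    refine le_bot_iff.mp (hinf ▸ le_inf ?_ ?_)
    · exact hsF ▸ fixedField_antitone
        (Subgroup.zpowers_le.mpr (Subgroup.subset_closure (Set.mem_insert s _)))
    · exact htF ▸ fixedField_antitone
        (Subgroup.zpowers_le.mpr (Subgroup.subset_closure (Set.mem_insert_of_mem s rfl)))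
  have : IsGalois K E :=
    IsGalois.of_fixedField_eq_bot K E (le_bot_iff.mp (hfix ▸ fixedField_antitone le_top))
  have htop : Subgroup.closure {s, t} = ⊤ := by
    rw [← fixingSubgroup_fixedField (Subgroup.closure {s, t}), hfix, fixingSubgroup_bot]
  refine ⟨fixedField (Subgroup.zpowers (s * t)), ?_⟩
  rw [finrank_eq_fixingSubgroup_index, fixingSubgroup_fixedField]
  exact Subgroup.index_zpowers_mul_eq_two hs ht htop (IsGalois.card_aut_eq_finrank K E ▸ hE)

end IntermediateField

/-- If E is a number field of degree 2g (g ≥ 3) all of whose subfields have degree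
1, g or 2g over ℚ, and E is not primitive, then E has exactly one proper subfield
other than ℚ, and that subfield has degree g. -/
theorem stmt_5 (E : Type*) [Field E] [NumberField E] (g : ℕ) (hg : 3 ≤ g)
    (hdeg : Module.finrank ℚ E = 2 * g)
    (hsub : ∀ F : IntermediateField ℚ E,
      Module.finrank ℚ F = 1 ∨ Module.finrank ℚ F = g ∨ Module.finrank ℚ F = 2 * g)
    (hnotprim : ∃ F : IntermediateField ℚ E, F ≠ ⊥ ∧ F ≠ ⊤) :
    (∃! F : IntermediateField ℚ E, F ≠ ⊥ ∧ F ≠ ⊤) ∧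
      ∀ F : IntermediateField ℚ E, F ≠ ⊥ → F ≠ ⊤ → Module.finrank ℚ F = g := by
  have hrank : ∀ F : IntermediateField ℚ E, F ≠ ⊥ → F ≠ ⊤ → finrank ℚ F = g := by
    intro F hbot htop
    rcases hsub F with h | h | h
    · exact absurd (finrank_eq_one_iff.mp h) hbot
    · exact h
    · exact absurd (eq_of_le_of_finrank_eq le_top (by rw [h, finrank_top', hdeg])) htop
  have hcodim : ∀ F : IntermediateField ℚ E, F ≠ ⊥ → F ≠ ⊤ → finrank F E = 2 := by
    intro F hbot htop
    have h := finrank_mul_finrank ℚ F E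
    rw [hrank F hbot htop, hdeg, mul_comm 2] at h
    exact Nat.eq_of_mul_eq_mul_left (by omega) h
  refine ⟨?_, hrank⟩
  obtain ⟨F₁, hF₁⟩ := hnotprim
  refine ⟨F₁, hF₁, fun F₂ hF₂ => by_contra fun hne => ?_⟩
  have hinf : F₂ ⊓ F₁ = ⊥ := by
    by_contra hbot
    have h := hrank _ hbot (ne_top_of_le_ne_top hF₁.2 inf_le_right)
    have h₂ := eq_of_le_of_finrank_eq inf_le_left (h.trans (hrank F₂ hF₂.1 hF₂.2).symm)
    have h₁ := eq_of_le_of_finrank_eq inf_le_right (h.trans (hrank F₁ hF₁.1 hF₁.2).symm)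
    exact hne (h₂.symm.trans h₁)
  obtain ⟨L, hL⟩ := exists_finrank_eq_two_of_inf_eq_bot (hcodim F₂ hF₂.1 hF₂.2)
    (hcodim F₁ hF₁.1 hF₁.2) hinf (by omega)
  rcases hsub L with h | h | h <;> omega
end

section
/- Let K/k be a field extension in characteristic 0 such that the fixed field of Aut(K/k) is k. Let V₀ be a finite-dimensional k-vector space and V = V₀ ⊗_k K, with the semilinear Aut(K/k)-action σ(v₀ ⊗ a) = v₀ ⊗ σ(a). Then a K-subspace W of V is Aut(K/k)-invariant if and only if there exists a k-subspace W₀ of V₀ with W = W₀ ⊗_k K; in that case W₀ = W ∩ V₀. -/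
/-!
The descended subspace of an `Aut(K/k)`-stable `W` is `W₀ = {v | 1 ⊗ v ∈ W}`. The key fact is
that a nonzero stable subspace contains a nonzero vector `1 ⊗ v`: take a nonzero vector of minimal
support in a basis `1 ⊗ bᵢ`, scaled to have a coordinate equal to `1`; then `σ y - y` has smaller
support, so `σ y = y` for all `σ`, and its coordinates lie in `K^{Aut(K/k)} = k`. Applied to the
image of `W` in `K ⊗ (V₀ / W₀)`, which contains no such vector, this gives `W ⊆ K ⊗ W₀`.
-/

open TensorProduct

section Descent

variable {k K M : Type*} [Field k] [Field K] [Algebra k K] [AddCommGroup M] [Module k M]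

theorem AlgEquiv.rTensor_baseChange {N : Type*} [AddCommGroup N] [Module k N] (σ : K ≃ₐ[k] K)
    (f : M →ₗ[k] N) (x : K ⊗[k] M) :
    σ.toLinearMap.rTensor N (f.baseChange K x) = f.baseChange K (σ.toLinearMap.rTensor M x) := by
  simp only [LinearMap.baseChange_eq_ltensor, ← LinearMap.comp_apply,
    LinearMap.rTensor_comp_lTensor, LinearMap.lTensor_comp_rTensor]

theorem Module.Basis.baseChange_repr_rTensor {ι : Type*} (b : Module.Basis ι k M)
    (σ : K ≃ₐ[k] K) (x : K ⊗[k] M) (i : ι) :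
    (b.baseChange K).repr (σ.toLinearMap.rTensor M x) i = σ ((b.baseChange K).repr x i) := by
  induction x using TensorProduct.induction_on with
  | zero => simp
  | tmul a v =>
    rw [LinearMap.rTensor_tmul, Module.Basis.baseChange_repr_tmul,
      Module.Basis.baseChange_repr_tmul, AlgEquiv.toLinearMap_apply, Algebra.smul_def,
      Algebra.smul_def, map_mul, AlgEquiv.commutes]
  | add x y hx hy => simp [hx, hy]

theorem exists_one_tmul_eq_of_forall_rTensor_eq
    (hfix : ∀ x : K, (∀ σ : K ≃ₐ[k] K, σ x = x) → ∃ y : k, algebraMap k K y = x)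
    {x : K ⊗[k] M} (hx : ∀ σ : K ≃ₐ[k] K, σ.toLinearMap.rTensor M x = x) :
    ∃ v : M, (1 : K) ⊗ₜ[k] v = x := by
  let b := Module.Basis.ofVectorSpace k M
  let bK := b.baseChange K
  have hcoord (i) : ∃ c : k, algebraMap k K c = bK.repr x i :=
    hfix _ fun σ ↦ by rw [← b.baseChange_repr_rTensor, hx]
  choose c hc using hcoord
  refine ⟨∑ i ∈ (bK.repr x).support, c i • b i, ?_⟩
  conv_rhs => rw [← bK.linearCombination_repr x, Finsupp.linearCombination_apply, Finsupp.sum]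
  rw [tmul_sum]
  refine Finset.sum_congr rfl fun i _ ↦ ?_
  rw [← hc i, Module.Basis.baseChange_apply, tmul_smul, algebraMap_smul]

namespace Submodule

def IsAutStable (W : Submodule K (K ⊗[k] M)) : Prop :=
  ∀ σ : K ≃ₐ[k] K, ∀ w ∈ W, σ.toLinearMap.rTensor M w ∈ W

variable (K) in
/-- The paper's `W ∩ V₀`. -/
def descent (W : Submodule K (K ⊗[k] M)) : Submodule k M :=
  (W.restrictScalars k).comap (TensorProduct.mk k K M 1)

theorem mem_descent {W : Submodule K (K ⊗[k] M)} {v : M} :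
    v ∈ descent K W ↔ (1 : K) ⊗ₜ[k] v ∈ W :=
  Iff.rfl

theorem baseChange_descent_le (W : Submodule K (K ⊗[k] M)) :
    (descent K W).baseChange K ≤ W := by
  rw [baseChange_eq_span, span_le]
  rintro _ ⟨v, hv, rfl⟩
  exact hv

theorem ker_baseChange_mkQ (p : Submodule k M) :
    LinearMap.ker (p.mkQ.baseChange K) = p.baseChange K :=
  restrictScalars_injective k _ _ (lTensor_mkQ K p)

theorem one_tmul_mem_baseChange_iff {p : Submodule k M} {v : M} :
    (1 : K) ⊗ₜ[k] v ∈ p.baseChange K ↔ v ∈ p := by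
  rw [← ker_baseChange_mkQ, LinearMap.mem_ker, LinearMap.baseChange_tmul,
    Module.FaithfullyFlat.one_tmul_eq_zero_iff, mkQ_apply, Quotient.mk_eq_zero]

theorem IsAutStable.map_baseChange {N : Type*} [AddCommGroup N] [Module k N]
    {W : Submodule K (K ⊗[k] M)} (hW : W.IsAutStable) (f : M →ₗ[k] N) :
    (W.map (f.baseChange K)).IsAutStable := by
  rintro σ _ ⟨x, hx, rfl⟩
  rw [AlgEquiv.rTensor_baseChange]
  exact mem_map_of_mem (hW σ x hx)

theorem isAutStable_baseChange (p : Submodule k M) : (p.baseChange K).IsAutStable := by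
  rw [baseChange, LinearMap.range_eq_map]
  exact IsAutStable.map_baseChange (fun _ _ _ ↦ mem_top) p.subtype

theorem IsAutStable.eq_bot_of_forall_one_tmul_mem
    (hfix : ∀ x : K, (∀ σ : K ≃ₐ[k] K, σ x = x) → ∃ y : k, algebraMap k K y = x)
    {W : Submodule K (K ⊗[k] M)} (hW : W.IsAutStable)
    (hrat : ∀ v : M, (1 : K) ⊗ₜ[k] v ∈ W → v = 0) : W = ⊥ := by
  classical
  let bK := (Module.Basis.ofVectorSpace k M).baseChange K
  suffices ∀ n, ∀ x ∈ W, (bK.repr x).support.card = n → x = 0 from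
    eq_bot_iff.2 fun x hx ↦ (mem_bot K).2 (this _ x hx rfl)
  refine fun n ↦ Nat.strong_induction_on n fun n ih ↦ ?_
  rintro x hx rfl
  by_contra hx0
  obtain ⟨i₀, hi₀⟩ : ∃ i₀, bK.repr x i₀ ≠ 0 := by
    by_contra! h
    exact hx0 (bK.repr.injective (by ext i; simp [h i]))
  set a := bK.repr x i₀
  set y := a⁻¹ • x
  have hyW : y ∈ W := W.smul_mem _ hx
  have hy (i) : bK.repr y i = a⁻¹ * bK.repr x i := by simp [y]
  -- `σ y - y` vanishes at `i₀`, where `y` has coordinate `1`, so it has smaller support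
  have hyfix (σ : K ≃ₐ[k] K) : σ.toLinearMap.rTensor M y = y := by
    rw [← sub_eq_zero]
    refine ih _ ?_ _ (W.sub_mem (hW σ y hyW) hyW) rfl
    refine Finset.card_lt_card (Finset.ssubset_of_subset_of_ssubset ?_
      (Finset.erase_ssubset (Finsupp.mem_support_iff.2 hi₀)))
    intro i hi
    rw [Finsupp.mem_support_iff, map_sub, Finsupp.sub_apply, Module.Basis.baseChange_repr_rTensor,
      hy] at hi
    rw [Finset.mem_erase, Finsupp.mem_support_iff]
    constructor
    · rintro rfl
      simp [a, inv_mul_cancel₀ hi₀] at hi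
    · rintro h0
      simp [h0] at hi
  obtain ⟨v, hv⟩ := exists_one_tmul_eq_of_forall_rTensor_eq hfix hyfix
  have hy0 : y = 0 := by rw [← hv, hrat v (hv ▸ hyW), tmul_zero]
  exact hx0 (by simpa [y, inv_ne_zero hi₀] using hy0)

theorem IsAutStable.le_baseChange_descent
    (hfix : ∀ x : K, (∀ σ : K ≃ₐ[k] K, σ x = x) → ∃ y : k, algebraMap k K y = x)
    {W : Submodule K (K ⊗[k] M)} (hW : W.IsAutStable) : W ≤ (descent K W).baseChange K := by
  set W₀ := descent K W
  rw [← ker_baseChange_mkQ, LinearMap.le_ker_iff_map]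
  refine (hW.map_baseChange W₀.mkQ).eq_bot_of_forall_one_tmul_mem hfix fun q hq ↦ ?_
  obtain ⟨v, rfl⟩ := W₀.mkQ_surjective q
  obtain ⟨x, hx, hxv⟩ := mem_map.1 hq
  have hdiff : x - (1 : K) ⊗ₜ[k] v ∈ W₀.baseChange K := by
    rw [← ker_baseChange_mkQ, LinearMap.mem_ker, map_sub, hxv, LinearMap.baseChange_tmul,
      sub_self]
  have hv : v ∈ W₀ :=
    mem_descent.2 (by simpa using W.sub_mem hx (baseChange_descent_le W hdiff))
  exact (Quotient.mk_eq_zero W₀).2 hv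

end Submodule

end Descent

theorem stmt_10_general (k K V₀ : Type*) [Field k] [Field K] [Algebra k K]
    [AddCommGroup V₀] [Module k V₀]
    (hfix : ∀ x : K, (∀ σ : K ≃ₐ[k] K, σ x = x) → ∃ y : k, algebraMap k K y = x)
    (W : Submodule K (K ⊗[k] V₀)) :
    ((∀ (σ : K ≃ₐ[k] K) (w : K ⊗[k] V₀), w ∈ W →
        TensorProduct.map σ.toLinearMap LinearMap.id w ∈ W) ↔
      ∃ W₀ : Submodule k V₀, W = W₀.baseChange K) ∧
    ∀ W₀ : Submodule k V₀, W = W₀.baseChange K →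
      ∀ v₀ : V₀, v₀ ∈ W₀ ↔ (1 : K) ⊗ₜ[k] v₀ ∈ W := by
  refine ⟨⟨fun hW ↦ ⟨Submodule.descent K W, ?_⟩, ?_⟩, ?_⟩
  · exact le_antisymm (Submodule.IsAutStable.le_baseChange_descent hfix hW)
      (Submodule.baseChange_descent_le W)
  · rintro ⟨W₀, rfl⟩
    exact Submodule.isAutStable_baseChange W₀
  · rintro W₀ rfl v₀
    exact Submodule.one_tmul_mem_baseChange_iff.symm

/-- Galois descent for subspaces: if K/k has K^{Aut(K/k)} = k and V = K ⊗_k V₀ with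
the semilinear Aut(K/k)-action on the first factor, then a K-subspace W of V is
invariant iff it is of the form W₀ ⊗_k K, and then W₀ = W ∩ V₀. -/
theorem stmt_10 (k K V₀ : Type*) [Field k] [Field K] [Algebra k K] [CharZero K]
    [AddCommGroup V₀] [Module k V₀] [FiniteDimensional k V₀]
    (hfix : ∀ x : K, (∀ σ : K ≃ₐ[k] K, σ x = x) → ∃ y : k, algebraMap k K y = x)
    (W : Submodule K (K ⊗[k] V₀)) :
    ((∀ (σ : K ≃ₐ[k] K) (w : K ⊗[k] V₀), w ∈ W →
        TensorProduct.map σ.toLinearMap LinearMap.id w ∈ W) ↔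
      ∃ W₀ : Submodule k V₀, W = W₀.baseChange K) ∧
    ∀ W₀ : Submodule k V₀, W = W₀.baseChange K →
      ∀ v₀ : V₀, v₀ ∈ W₀ ↔ (1 : K) ⊗ₜ[k] v₀ ∈ W :=
  stmt_10_general k K V₀ hfix W
end

section
/- Let E be a number field and Λ a finite-dimensional E-vector space, viewed as a ℚ-vector space. Let H_E be the space of ℚ-bilinear alternating forms φ: Λ × Λ → ℚ satisfying φ(uλ₁, λ₂) = φ(λ₁, uλ₂) for all u ∈ E and λ₁, λ₂ ∈ Λ. Then the map φ_E ↦ Tr_{E/ℚ} ∘ φ_E gives a ℚ-linear isomorphism from the space Hom_E(∧²_E Λ, E) of E-bilinear alternating forms on Λ onto H_E. -/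
/-!
For a finite separable extension `L/K` the trace form is nondegenerate, so composing with the
trace identifies `L`-linear functionals on an `L`-module `M` with `K`-linear ones: a `K`-linear
`g` lifts to `y ↦ β_y`, where `β_y ∈ L` represents `u ↦ g (u • y)` under the trace form.
Applying this to each `ψ x` lifts an `L`-balanced `K`-bilinear form `ψ` uniquely to an
`L`-bilinear `φ`; balancedness is exactly what makes `φ` `L`-linear in its first argument.
If `ψ` is alternating then `Tr (u φ(x, x)) = ψ (u • x) x` equals its own negative, so `φ` is
alternating once `2 ≠ 0` in `K`.
-/

namespace Algebra

variable (K : Type*) {L M : Type*} [Field K] [Field L] [Algebra K L]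
  [AddCommGroup M] [Module K M] [Module L M] [IsScalarTower K L M]

noncomputable def traceComp : Module.Dual L M →ₗ[K] Module.Dual K M where
  toFun f := trace K L ∘ₗ f.restrictScalars K
  map_add' f g := by ext; simp
  map_smul' c f := by ext; simp

@[simp]
theorem traceComp_apply (f : Module.Dual L M) (y : M) : traceComp K f y = trace K L (f y) := rfl

variable [FiniteDimensional K L] [Algebra.IsSeparable K L]

theorem eq_of_forall_trace_mul_eq {a b : L} (h : ∀ u, trace K L (a * u) = trace K L (b * u)) :
    a = b :=
  sub_eq_zero.mp <| (traceForm_nondegenerate K L).1 _ fun u => by simp [h u]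

theorem traceComp_injective : Function.Injective (traceComp K : Module.Dual L M → _) := by
  intro f g hfg
  ext y
  refine eq_of_forall_trace_mul_eq K fun u => ?_
  simpa [mul_comm _ u] using LinearMap.congr_fun hfg (u • y)

theorem traceComp_surjective : Function.Surjective (traceComp K : Module.Dual L M → _) := by
  intro g
  let e := (traceForm K L).toDual (traceForm_nondegenerate K L)
  let lift (y : M) : L := e.symm (g ∘ₗ (LinearMap.toSpanSingleton L M y).restrictScalars K)
  have trace_lift_mul (y : M) (u : L) : trace K L (lift y * u) = g (u • y) := by
    rw [← traceForm_apply, LinearMap.BilinForm.apply_toDual_symm_apply]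
    simp
  refine ⟨{ toFun := lift, map_add' := ?_, map_smul' := ?_ }, ?_⟩
  · intro y z
    refine eq_of_forall_trace_mul_eq K fun u => ?_
    simp [add_mul, trace_lift_mul]
  · intro v y
    refine eq_of_forall_trace_mul_eq K fun u => ?_
    rw [smul_eq_mul, mul_assoc, mul_left_comm, trace_lift_mul, trace_lift_mul, smul_smul,
      RingHom.id_apply, mul_comm]
  · ext y
    simpa using trace_lift_mul y 1

noncomputable def traceCompEquiv : Module.Dual L M ≃ₗ[K] Module.Dual K M :=
  .ofBijective (traceComp K) ⟨traceComp_injective K, traceComp_surjective K⟩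

@[simp]
theorem traceCompEquiv_apply (f : Module.Dual L M) (y : M) :
    traceCompEquiv K f y = trace K L (f y) := rfl

@[simp]
theorem trace_traceCompEquiv_symm_apply (g : Module.Dual K M) (y : M) :
    trace K L ((traceCompEquiv K).symm g y) = g y :=
  LinearMap.congr_fun ((traceCompEquiv K).apply_symm_apply g) y

theorem existsUnique_trace_comp₂_eq (ψ : M →ₗ[K] M →ₗ[K] K)
    (hψ : ∀ (u : L) (x y : M), ψ (u • x) y = ψ x (u • y)) :
    ∃! φ : M →ₗ[L] M →ₗ[L] L, ∀ x y, trace K L (φ x y) = ψ x y := by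
  let φ : M →ₗ[L] M →ₗ[L] L :=
    { toFun x := (traceCompEquiv K).symm (ψ x)
      map_add' x y := by simp
      map_smul' v x := (traceCompEquiv K).injective <| LinearMap.ext fun y => by
        rw [traceCompEquiv_apply, traceCompEquiv_apply, LinearMap.smul_apply, RingHom.id_apply,
          ← LinearMap.map_smul, trace_traceCompEquiv_symm_apply, trace_traceCompEquiv_symm_apply,
          hψ] }
  refine ⟨φ, fun x y => trace_traceCompEquiv_symm_apply K (ψ x) y, fun φ' hφ' => ?_⟩
  refine LinearMap.ext fun x => ?_
  exact (traceCompEquiv K).eq_symm_apply.mpr (LinearMap.ext (hφ' x))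

theorem isAlt_of_trace_comp₂ (hK : ringChar K ≠ 2) {φ : M →ₗ[L] M →ₗ[L] L}
    (hφ : ∀ x, trace K L (φ x x) = 0) : φ.IsAlt := by
  intro x
  refine eq_of_forall_trace_mul_eq K fun u => ?_
  -- `trace ∘ φ` is alternating, hence skew, yet symmetric on the pair `(u • x, x)`
  have skew := LinearMap.IsAlt.neg (B := (φ.restrictScalars₁₂ K K).compr₂ (trace K L)) hφ (u • x) x
  simp only [LinearMap.compr₂_apply, LinearMap.restrictScalars₁₂_apply_apply, map_smul,
    LinearMap.smul_apply, smul_eq_mul] at skew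
  rw [zero_mul, map_zero, mul_comm, ← (Ring.eq_self_iff_eq_zero_of_char_ne_two hK)]
  exact skew

end Algebra

theorem stmt_18_general (E Λ : Type*) [Field E] [NumberField E]
    [AddCommGroup Λ] [Module E Λ] [Module ℚ Λ] [IsScalarTower ℚ E Λ] :
    (∀ φ : Λ →ₗ[E] Λ →ₗ[E] E, (∀ x, φ x x = 0) →
      ((∀ x : Λ, Algebra.trace ℚ E (φ x x) = 0) ∧
        ∀ (u : E) (x y : Λ),
          Algebra.trace ℚ E (φ (u • x) y) = Algebra.trace ℚ E (φ x (u • y)))) ∧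
    (∀ ψ : Λ →ₗ[ℚ] Λ →ₗ[ℚ] ℚ, (∀ x, ψ x x = 0) →
      (∀ (u : E) (x y : Λ), ψ (u • x) y = ψ x (u • y)) →
      ∃! φ : Λ →ₗ[E] Λ →ₗ[E] E, (∀ x, φ x x = 0) ∧
        ∀ x y : Λ, Algebra.trace ℚ E (φ x y) = ψ x y) := by
  refine ⟨fun φ hφ => ⟨fun x => by rw [hφ x, map_zero], fun u x y => by simp⟩,
    fun ψ hψ hψE => ?_⟩
  obtain ⟨φ, hφψ, hφ_unique⟩ := Algebra.existsUnique_trace_comp₂_eq ℚ ψ hψE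
  have hφ : φ.IsAlt :=
    Algebra.isAlt_of_trace_comp₂ ℚ (by simp) fun x => (hφψ x x).trans (hψ x)
  exact ⟨φ, ⟨hφ, hφψ⟩, fun φ' h => hφ_unique φ' h.2⟩

/-- For a number field E and a finite-dimensional E-vector space Λ, composing with
the trace Tr_{E/ℚ} gives a bijection between E-bilinear alternating forms on Λ and
ℚ-bilinear alternating forms φ on Λ satisfying φ(uλ₁, λ₂) = φ(λ₁, uλ₂) for all
u ∈ E. -/
theorem stmt_18 (E Λ : Type*) [Field E] [NumberField E]
    [AddCommGroup Λ] [Module E Λ] [Module ℚ Λ] [IsScalarTower ℚ E Λ]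
    [FiniteDimensional E Λ] :
    (∀ φ : Λ →ₗ[E] Λ →ₗ[E] E, (∀ x, φ x x = 0) →
      ((∀ x : Λ, Algebra.trace ℚ E (φ x x) = 0) ∧
        ∀ (u : E) (x y : Λ),
          Algebra.trace ℚ E (φ (u • x) y) = Algebra.trace ℚ E (φ x (u • y)))) ∧
    (∀ ψ : Λ →ₗ[ℚ] Λ →ₗ[ℚ] ℚ, (∀ x, ψ x x = 0) →
      (∀ (u : E) (x y : Λ), ψ (u • x) y = ψ x (u • y)) →
      ∃! φ : Λ →ₗ[E] Λ →ₗ[E] E, (∀ x, φ x x = 0) ∧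
        ∀ x y : Λ, Algebra.trace ℚ E (φ x y) = ψ x y) :=
  stmt_18_general E Λ
end
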